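/- For a uniformly random permutation π of {1,...,n} (n ≥ 4), ∑_{distinct i,j=1}^{⌊n/2⌋} E[d(π(2i-1),π(2i))·d(π(2j-1),π(2j))] ≤ ⌊n/2⌋·(⌊n/2⌋-1)·(n²r̄)²/(n(n-1)(n-2)(n-3)), where r̄ = (1/n²)·∑_{x,y} d(x,y). -/
import Mathlib


open Finset


lemma card_subtype_ne (n : ℕ) (a b c d : Fin n)
    (hab : a ≠ b) (hac : a ≠ c) (had : a ≠ d) (hbc : b ≠ c) (hbd : b ≠ d) (hcd : c ≠ d) :
    Fintype.card {i : Fin n // i ≠ a ∧ i ≠ b ∧ i ≠ c ∧ i ≠ d} = n - 4 := by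
  rw [Fintype.card_subtype]
  have h : Finset.univ.filter (fun i : Fin n => i ≠ a ∧ i ≠ b ∧ i ≠ c ∧ i ≠ d)
      = Finset.univ \ {a, b, c, d} := by
    ext i; simp [not_or, and_assoc]
  rw [h, Finset.card_sdiff_of_subset (Finset.subset_univ _)]
  have h4 : ({a, b, c, d} : Finset (Fin n)).card = 4 := by
    rw [Finset.card_insert_of_notMem (by simp [hab, hac, had]),
        Finset.card_insert_of_notMem (by simp [hbc, hbd]),
        Finset.card_insert_of_notMem (by simp [hcd]), Finset.card_singleton]
  simp [h4]

lemma card_fix_le (n : ℕ) (a b c d x y z w : Fin n)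
    (hab : a ≠ b) (hac : a ≠ c) (had : a ≠ d) (hbc : b ≠ c) (hbd : b ≠ d) (hcd : c ≠ d) :
    (Finset.univ.filter (fun π : Equiv.Perm (Fin n) =>
      π a = x ∧ π b = y ∧ π c = z ∧ π d = w)).card ≤ (n - 4).factorial := by
  by_cases hdist : x ≠ y ∧ x ≠ z ∧ x ≠ w ∧ y ≠ z ∧ y ≠ w ∧ z ≠ w
  · obtain ⟨hxy, hxz, hxw, hyz, hyw, hzw⟩ := hdist
    have hcp : Fintype.card {i : Fin n // i ≠ a ∧ i ≠ b ∧ i ≠ c ∧ i ≠ d} = n - 4 :=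
      card_subtype_ne n a b c d hab hac had hbc hbd hcd
    have hcq : Fintype.card {i : Fin n // i ≠ x ∧ i ≠ y ∧ i ≠ z ∧ i ≠ w} = n - 4 :=
      card_subtype_ne n x y z w hxy hxz hxw hyz hyw hzw
    have e : {i : Fin n // i ≠ x ∧ i ≠ y ∧ i ≠ z ∧ i ≠ w}
        ≃ {i : Fin n // i ≠ a ∧ i ≠ b ∧ i ≠ c ∧ i ≠ d} :=
      Fintype.equivOfCardEq (hcq.trans hcp.symm)
    have key : ∀ π : Equiv.Perm (Fin n), (π a = x ∧ π b = y ∧ π c = z ∧ π d = w) →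
        ∀ i, (i ≠ a ∧ i ≠ b ∧ i ≠ c ∧ i ≠ d) ↔
          (π i ≠ x ∧ π i ≠ y ∧ π i ≠ z ∧ π i ≠ w) := by
      rintro π ⟨h1, h2, h3, h4⟩ i
      simp [← h1, ← h2, ← h3, ← h4, EmbeddingLike.apply_eq_iff_eq]
    set S := Finset.univ.filter (fun π : Equiv.Perm (Fin n) =>
      π a = x ∧ π b = y ∧ π c = z ∧ π d = w) with hS
    have hmem : ∀ π : {π : Equiv.Perm (Fin n) // π ∈ S},
        π.1 a = x ∧ π.1 b = y ∧ π.1 c = z ∧ π.1 d = w := by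
      intro π; have := π.2; simp only [hS, Finset.mem_filter] at this; exact this.2
    have hle : S.card ≤ Fintype.card
        (Equiv.Perm {i : Fin n // i ≠ a ∧ i ≠ b ∧ i ≠ c ∧ i ≠ d}) := by
      rw [← Fintype.card_coe]
      apply Fintype.card_le_of_injective
        (fun π : {π : Equiv.Perm (Fin n) // π ∈ S} =>
          ((Equiv.subtypeEquiv (p := fun i => i ≠ a ∧ i ≠ b ∧ i ≠ c ∧ i ≠ d) (q := fun j => j ≠ x ∧ j ≠ y ∧ j ≠ z ∧ j ≠ w) π.1 (key π.1 (hmem π))).trans e))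
      intro π₁ π₂ h
      have hA : Equiv.subtypeEquiv (p := fun i => i ≠ a ∧ i ≠ b ∧ i ≠ c ∧ i ≠ d) (q := fun j => j ≠ x ∧ j ≠ y ∧ j ≠ z ∧ j ≠ w) π₁.1 (key π₁.1 (hmem π₁))
          = Equiv.subtypeEquiv (p := fun i => i ≠ a ∧ i ≠ b ∧ i ≠ c ∧ i ≠ d) (q := fun j => j ≠ x ∧ j ≠ y ∧ j ≠ z ∧ j ≠ w) π₂.1 (key π₂.1 (hmem π₂)) := by
        have := congrArg (fun f => f.trans e.symm) h
        simpa [Equiv.trans_assoc] using this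
      obtain ⟨m1, m2, m3, m4⟩ := hmem π₁
      obtain ⟨k1, k2, k3, k4⟩ := hmem π₂
      apply Subtype.ext
      apply Equiv.ext
      intro i
      by_cases hp : i ≠ a ∧ i ≠ b ∧ i ≠ c ∧ i ≠ d
      · have := congrArg (fun f :
            ({i : Fin n // i ≠ a ∧ i ≠ b ∧ i ≠ c ∧ i ≠ d}
              ≃ {i : Fin n // i ≠ x ∧ i ≠ y ∧ i ≠ z ∧ i ≠ w}) =>
            (f ⟨i, hp⟩ : Fin n)) hA
        simpa using this
      · push_neg at hp
        by_cases h1 : i = a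
        · rw [h1, m1, k1]
        by_cases h2 : i = b
        · rw [h2, m2, k2]
        by_cases h3 : i = c
        · rw [h3, m3, k3]
        rw [hp h1 h2 h3, m4, k4]
    calc S.card ≤ _ := hle
      _ = (n - 4).factorial := by rw [Fintype.card_perm, hcp]
  · have : Finset.univ.filter (fun π : Equiv.Perm (Fin n) =>
        π a = x ∧ π b = y ∧ π c = z ∧ π d = w) = ∅ := by
      rw [Finset.filter_eq_empty_iff]
      rintro π - ⟨h1, h2, h3, h4⟩
      apply hdist
      refine ⟨?_, ?_, ?_, ?_, ?_, ?_⟩ <;> intro hE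
      · exact hab (π.injective (h1.trans (hE ▸ h2.symm)))
      · exact hac (π.injective (h1.trans (hE ▸ h3.symm)))
      · exact had (π.injective (h1.trans (hE ▸ h4.symm)))
      · exact hbc (π.injective (h2.trans (hE ▸ h3.symm)))
      · exact hbd (π.injective (h2.trans (hE ▸ h4.symm)))
      · exact hcd (π.injective (h3.trans (hE ▸ h4.symm)))
    rw [this]
    simp [Nat.factorial_pos]


lemma sum_perm_le (n : ℕ) (dd : Fin n → Fin n → ℝ) (hnn : ∀ x y, 0 ≤ dd x y)
    (a b c d : Fin n)
    (hab : a ≠ b) (hac : a ≠ c) (had : a ≠ d) (hbc : b ≠ c) (hbd : b ≠ d) (hcd : c ≠ d) :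
    ∑ π : Equiv.Perm (Fin n), dd (π a) (π b) * dd (π c) (π d)
      ≤ ((n - 4).factorial : ℝ) * (∑ x : Fin n, ∑ y : Fin n, dd x y) ^ 2 := by
  have h1 : ∀ π : Equiv.Perm (Fin n),
      dd (π a) (π b) * dd (π c) (π d)
        = ∑ x : Fin n, ∑ y : Fin n, ∑ z : Fin n, ∑ w : Fin n,
            if π a = x ∧ π b = y ∧ π c = z ∧ π d = w then dd x y * dd z w else 0 := by
    intro π
    simp [ite_and, Finset.sum_ite_eq]
  calc ∑ π : Equiv.Perm (Fin n), dd (π a) (π b) * dd (π c) (π d)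
      = ∑ x : Fin n, ∑ y : Fin n, ∑ z : Fin n, ∑ w : Fin n, ∑ π : Equiv.Perm (Fin n),
          if π a = x ∧ π b = y ∧ π c = z ∧ π d = w then dd x y * dd z w else 0 := by
        simp_rw [h1]
        rw [Finset.sum_comm]
        refine Finset.sum_congr rfl fun x _ => ?_
        rw [Finset.sum_comm]
        refine Finset.sum_congr rfl fun y _ => ?_
        rw [Finset.sum_comm]
        refine Finset.sum_congr rfl fun z _ => ?_
        rw [Finset.sum_comm]
    _ ≤ ∑ x : Fin n, ∑ y : Fin n, ∑ z : Fin n, ∑ w : Fin n,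
          ((n - 4).factorial : ℝ) * (dd x y * dd z w) := by
        refine Finset.sum_le_sum fun x _ => Finset.sum_le_sum fun y _ =>
          Finset.sum_le_sum fun z _ => Finset.sum_le_sum fun w _ => ?_
        rw [Finset.sum_ite, Finset.sum_const, Finset.sum_const_zero, add_zero,
          nsmul_eq_mul]
        have hc : ((Finset.univ.filter (fun π : Equiv.Perm (Fin n) =>
            π a = x ∧ π b = y ∧ π c = z ∧ π d = w)).card : ℝ)
            ≤ ((n - 4).factorial : ℝ) :=
          Nat.cast_le.mpr (card_fix_le n a b c d x y z w hab hac had hbc hbd hcd)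
        exact mul_le_mul_of_nonneg_right hc (mul_nonneg (hnn x y) (hnn z w))
    _ = ((n - 4).factorial : ℝ) * (∑ x : Fin n, ∑ y : Fin n, dd x y) ^ 2 := by
        simp_rw [← Finset.mul_sum, ← Finset.sum_mul]
        rw [sq]


theorem stmt12 (n : ℕ) (hn : 4 ≤ n) (d : Fin n → Fin n → ℝ)
    (hnn : ∀ x y, 0 ≤ d x y)
    (hid : ∀ x y, d x y = 0 ↔ x = y)
    (hsymm : ∀ x y, d x y = d y x)
    (htri : ∀ x y z, d x z ≤ d x y + d y z)
    (rbar : ℝ) (hrbar : rbar = (1 / (n : ℝ) ^ 2) * ∑ x : Fin n, ∑ y : Fin n, d x y) :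
    (∑ i : Fin (n / 2), ∑ j : Fin (n / 2),
      (if i ≠ j then
        (∑ π : Equiv.Perm (Fin n),
          d (π ⟨2 * i.val, by have := i.isLt; omega⟩)
              (π ⟨2 * i.val + 1, by have := i.isLt; omega⟩) *
            d (π ⟨2 * j.val, by have := j.isLt; omega⟩)
              (π ⟨2 * j.val + 1, by have := j.isLt; omega⟩)) / (Nat.factorial n : ℝ)
       else 0))
      ≤ ((n / 2 : ℕ) : ℝ) * (((n / 2 : ℕ) : ℝ) - 1) * ((n : ℝ) ^ 2 * rbar) ^ 2
          / ((n : ℝ) * ((n : ℝ) - 1) * ((n : ℝ) - 2) * ((n : ℝ) - 3)) := by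
  have hn0 : (0 : ℝ) < n := by positivity
  have hnR : (4 : ℝ) ≤ (n : ℝ) := by exact_mod_cast hn
  set S : ℝ := ∑ x : Fin n, ∑ y : Fin n, d x y with hSdef
  have hS : (n : ℝ) ^ 2 * rbar = S := by
    rw [hrbar]
    field_simp
  set D : ℝ := (n : ℝ) * ((n : ℝ) - 1) * ((n : ℝ) - 2) * ((n : ℝ) - 3) with hDdef
  have hD : 0 < D := by
    apply mul_pos (mul_pos (mul_pos hn0 (by linarith)) (by linarith)); linarith
  have hfact : (n.factorial : ℝ) = D * ((n - 4).factorial : ℝ) := by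
    obtain ⟨m, rfl⟩ : ∃ m, n = m + 4 := ⟨n - 4, by omega⟩
    have : (m + 4).factorial = (m + 4) * ((m + 3) * ((m + 2) * ((m + 1) * m.factorial))) := by
      rw [show m + 4 = (m + 3) + 1 from rfl, Nat.factorial_succ,
        show m + 3 = (m + 2) + 1 from rfl, Nat.factorial_succ,
        show m + 2 = (m + 1) + 1 from rfl, Nat.factorial_succ, Nat.factorial_succ]
    rw [this, hDdef]
    have : m + 4 - 4 = m := by omega
    rw [this]
    push_cast
    ring
  set X : ℝ := ((n : ℝ) ^ 2 * rbar) ^ 2 / D with hXdef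
  have hX0 : 0 ≤ X := div_nonneg (sq_nonneg _) hD.le
  have hfac0 : (0 : ℝ) < (n.factorial : ℝ) := by exact_mod_cast n.factorial_pos
  -- per-term bound
  have hterm : ∀ i j : Fin (n / 2), i ≠ j →
      (∑ π : Equiv.Perm (Fin n),
          d (π ⟨2 * i.val, by have := i.isLt; omega⟩)
              (π ⟨2 * i.val + 1, by have := i.isLt; omega⟩) *
            d (π ⟨2 * j.val, by have := j.isLt; omega⟩)
              (π ⟨2 * j.val + 1, by have := j.isLt; omega⟩)) / (Nat.factorial n : ℝ)
        ≤ X := by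
    intro i j hij
    have hij' : i.val ≠ j.val := fun h => hij (Fin.ext h)
    have hbound := sum_perm_le n d hnn
      ⟨2 * i.val, by have := i.isLt; omega⟩ ⟨2 * i.val + 1, by have := i.isLt; omega⟩
      ⟨2 * j.val, by have := j.isLt; omega⟩ ⟨2 * j.val + 1, by have := j.isLt; omega⟩
      (by simp only [ne_eq, Fin.mk.injEq]; omega) (by simp only [ne_eq, Fin.mk.injEq]; omega)
      (by simp only [ne_eq, Fin.mk.injEq]; omega) (by simp only [ne_eq, Fin.mk.injEq]; omega)
      (by simp only [ne_eq, Fin.mk.injEq]; omega) (by simp only [ne_eq, Fin.mk.injEq]; omega)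
    rw [hXdef, hS, div_le_div_iff₀ hfac0 hD]
    calc (∑ π : Equiv.Perm (Fin n), _) * D
        ≤ (((n - 4).factorial : ℝ) * S ^ 2) * D :=
          mul_le_mul_of_nonneg_right hbound hD.le
      _ = S ^ 2 * (n.factorial : ℝ) := by rw [hfact]; ring
  -- compare sums
  calc (∑ i : Fin (n / 2), ∑ j : Fin (n / 2),
      (if i ≠ j then
        (∑ π : Equiv.Perm (Fin n),
          d (π ⟨2 * i.val, by have := i.isLt; omega⟩)
              (π ⟨2 * i.val + 1, by have := i.isLt; omega⟩) *
            d (π ⟨2 * j.val, by have := j.isLt; omega⟩)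
              (π ⟨2 * j.val + 1, by have := j.isLt; omega⟩)) / (Nat.factorial n : ℝ)
       else 0))
      ≤ ∑ i : Fin (n / 2), ∑ j : Fin (n / 2), (if i ≠ j then X else 0) := by
        refine Finset.sum_le_sum fun i _ => Finset.sum_le_sum fun j _ => ?_
        split_ifs with h
        · exact hterm i j h
        · exact le_rfl
    _ = ((n / 2 : ℕ) : ℝ) * (((n / 2 : ℕ) : ℝ) - 1) * X := by
        have hk : 2 ≤ n / 2 := by omega
        have hcard : ∀ i : Fin (n / 2),
            ∑ j : Fin (n / 2), (if i ≠ j then X else 0) = (((n / 2) : ℕ) - 1 : ℕ) * X := by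
          intro i
          rw [Finset.sum_ite, Finset.sum_const, Finset.sum_const_zero, add_zero, nsmul_eq_mul]
          congr 1
          norm_cast
          rw [Finset.filter_ne, Finset.card_erase_of_mem (Finset.mem_univ i)]
          simp
        simp_rw [hcard]
        rw [Finset.sum_const, nsmul_eq_mul]
        simp only [Finset.card_univ, Fintype.card_fin]
        have : (((n / 2) - 1 : ℕ) : ℝ) = ((n / 2 : ℕ) : ℝ) - 1 := by
          have : 1 ≤ n / 2 := by omega
          push_cast [this]
          ring
        rw [this]; ring
    _ = ((n / 2 : ℕ) : ℝ) * (((n / 2 : ℕ) : ℝ) - 1) * ((n : ℝ) ^ 2 * rbar) ^ 2 / D := by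
        rw [hXdef]; ring
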